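/- Every input value-flow path generated by the grammar is an input path: with Π_SL denoting same-level paths and Π_IN(Vfp, Vsink) denoting walks from a formal parameter to a sink vertex whose endpoint lies in the same context as, or in a (transitive) callee context of, the start vertex, prove Π_IN(Vfp, Vsink) ⊇ Π_SL(Vfp, Vsink) ∪ Π_SL(Vfp, Vap)·Π_IN(Vfp, Vsink). -/
import Mathlib


/-- The set of (finite, nonempty) walks in the directed graph with edge relation `E`
starting at a vertex of `V1` and ending at a vertex of `V2`. -/
def Walks {V : Type*} (E : V → V → Prop) (V1 V2 : Set V) : Set (List V) :=
  {l | l ≠ [] ∧ l.Chain' E ∧ (∃ a ∈ V1, l.head? = some a) ∧ ∃ b ∈ V2, l.getLast? = some b}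

/-- Concatenation of two sets of walks: `A·B = { π1π2 : π1 ∈ A, π2 ∈ B,
(last π1, first π2) ∈ E }`. -/
def conc {V : Type*} (E : V → V → Prop) (A B : Set (List V)) : Set (List V) :=
  {l | ∃ p ∈ A, ∃ q ∈ B,
    (∃ a b, p.getLast? = some a ∧ q.head? = some b ∧ E a b) ∧ l = p ++ q}

/-- Intra-procedural walks: all vertices share a single context. -/
def IPWalks {V C : Type*} (E : V → V → Prop) (ctx : V → C) (V1 V2 : Set V) :
    Set (List V) :=
  {l | l ∈ Walks E V1 V2 ∧ ∀ x ∈ l, ∀ y ∈ l, ctx x = ctx y}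

/-- Same-level walks: the first and last vertices share the same context. -/
def SLWalks {V C : Type*} (E : V → V → Prop) (ctx : V → C) (V1 V2 : Set V) :
    Set (List V) :=
  {l | l ∈ Walks E V1 V2 ∧
    ∃ a b, l.head? = some a ∧ l.getLast? = some b ∧ ctx a = ctx b}

/-- Input walks: walks from `V1` to `V2` whose endpoint lies in the same context
as, or in a (transitive) callee context of, the start vertex; `r c c'` means `c'`
is a transitive callee of `c`. -/
def INWalks {V C : Type*} (E : V → V → Prop) (ctx : V → C) (r : C → C → Prop)
    (V1 V2 : Set V) : Set (List V) :=
  {l | l ∈ Walks E V1 V2 ∧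
    ∃ a b, l.head? = some a ∧ l.getLast? = some b ∧
      (ctx b = ctx a ∨ r (ctx a) (ctx b))}

/-- Lemma 3, ⊇ direction: `Π_IN(Vfp, Vsink) ⊇ Π_SL(Vfp, Vsink) ∪
Π_SL(Vfp, Vap)·Π_IN(Vfp, Vsink)`. -/
theorem input_superset {V C : Type*} (E : V → V → Prop) (ctx : V → C)
    (r : C → C → Prop) (htrans : Transitive r)
    (Vfp Vap Vsink : Set V)
    (hcall : ∀ u v, E u v → u ∈ Vap → v ∈ Vfp → r (ctx u) (ctx v))
    (hintra : ∀ u v, E u v → ¬ (u ∈ Vap ∧ v ∈ Vfp) → ctx u = ctx v) :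
    SLWalks E ctx Vfp Vsink ∪
      conc E (SLWalks E ctx Vfp Vap) (INWalks E ctx r Vfp Vsink) ⊆
      INWalks E ctx r Vfp Vsink := by
  rintro l (⟨hw, a, b, ha, hb, hab⟩ |
      ⟨p, ⟨⟨hpne, hpch, ⟨a, haV, hpa⟩, ⟨b, hbV, hpb⟩⟩, a', b', hpa', hpb', hab'⟩,
      q, ⟨⟨hqne, hqch, ⟨c, hcV, hqc⟩, ⟨d, hdV, hqd⟩⟩, c', d', hqc', hqd', hcd'⟩,
      ⟨x, y, hx, hy, hE⟩, rfl⟩)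
  · exact ⟨hw, a, b, ha, hb, Or.inl hab.symm⟩
  -- clean up duplicate witnesses
  rw [hpa] at hpa'; rw [hpb] at hpb'; rw [hqc] at hqc'; rw [hqd] at hqd'
  rw [hpb] at hx; rw [hqc] at hy
  obtain rfl : a = a' := Option.some.inj hpa'
  obtain rfl : b = b' := Option.some.inj hpb'
  obtain rfl : c = c' := Option.some.inj hqc'
  obtain rfl : d = d' := Option.some.inj hqd'
  obtain rfl : b = x := Option.some.inj hx
  obtain rfl : c = y := Option.some.inj hy
  have hbc : r (ctx b) (ctx c) := hcall _ _ hE hbV hcV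
  have hhead : (p ++ q).head? = some a := by
    rw [List.head?_append]; simp [hpa]
  have hlast : (p ++ q).getLast? = some d := by
    rw [List.getLast?_append]; simp [hqd]
  refine ⟨⟨by simp [hpne], ?_, ⟨a, haV, hhead⟩, ⟨d, hdV, hlast⟩⟩, a, d, hhead, hlast, ?_⟩
  · refine List.IsChain.append hpch hqch ?_
    intro x hx' y hy'
    rw [hpb] at hx'; rw [hqc] at hy'
    obtain rfl := Option.some.inj hx'
    obtain rfl := Option.some.inj hy'
    exact hE
  · right
    have hac : r (ctx a) (ctx c) := hab' ▸ hbc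
    rcases hcd' with h | h
    · exact h ▸ hac
    · exact htrans hac h
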